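/- arXiv:1201.5239 — 10 statements merged into one kernel-verified Lean document; each statement's English description precedes it below -/
import Mathlib

section
/- For every set S of sorts, the category Alg(H_S) of Hall algebras for S and the category Alg(B_S) of Bénabou algebras for S are equivalent categories. -/
/-!
Tupling and projections make a Bénabou algebra's `B_{u,w}` the product of its one-letter parts
`B_{u,(w_i)}` (B1, B3), and a substitution `ξ(a, b₀, …)` is the composite `a ∘ ⟨b₀, …⟩`; so a
Bénabou algebra is determined by its one-letter part, which is a Hall algebra. Conversely a Hall
algebra becomes a Bénabou algebra with `B_{u,w} = ∏ᵢ A_{u,w_i}`, composed by substitution.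
Hall → Bénabou → Hall only wraps operations into one-letter tuples; Bénabou → Hall → Bénabou is
identified with the identity by tupling, where (B4) makes tupling of a single one-letter morphism
the identity.
-/

open CategoryTheory

universe u

namespace Stmt0

/-- A Hall algebra for a set of sorts `S` (words on `S` being represented as functions
`Fin m → S`): an `S* × S`-sorted family of sets equipped with projections and substitution
operations satisfying the Hall axioms (H1)–(H3). -/
structure HallAlgebra (S : Type u) : Type (u + 1) where
  carrier : ∀ m : ℕ, (Fin m → S) → S → Type u
  proj : ∀ (m : ℕ) (w : Fin m → S) (i : Fin m), carrier m w (w i)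
  subst : ∀ (n m : ℕ) (u : Fin n → S) (w : Fin m → S) (s : S),
    carrier m w s → (∀ i : Fin m, carrier n u (w i)) → carrier n u s
  H1 : ∀ (n m : ℕ) (u : Fin n → S) (w : Fin m → S) (i : Fin m)
      (b : ∀ j : Fin m, carrier n u (w j)),
    subst n m u w (w i) (proj m w i) b = b i
  H2 : ∀ (n : ℕ) (u : Fin n → S) (s : S) (a : carrier n u s),
    subst n n u u s a (proj n u) = a
  H3 : ∀ (n k m : ℕ) (u : Fin n → S) (v : Fin k → S) (w : Fin m → S) (s : S)
      (a : carrier m w s) (b : ∀ j : Fin m, carrier k v (w j))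
      (c : ∀ l : Fin k, carrier n u (v l)),
    subst n k u v s (subst k m v w s a b) c
      = subst n m u w s a (fun j => subst n k u v (w j) (b j) c)

/-- A homomorphism of Hall algebras. -/
@[ext]
structure HallHom {S : Type u} (A B : HallAlgebra S) where
  app : ∀ (m : ℕ) (w : Fin m → S) (s : S), A.carrier m w s → B.carrier m w s
  map_proj : ∀ (m : ℕ) (w : Fin m → S) (i : Fin m),
    app m w (w i) (A.proj m w i) = B.proj m w i
  map_subst : ∀ (n m : ℕ) (u : Fin n → S) (w : Fin m → S) (s : S)
      (a : A.carrier m w s) (b : ∀ i : Fin m, A.carrier n u (w i)),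
    app n u s (A.subst n m u w s a b)
      = B.subst n m u w s (app m w s a) (fun j => app n u (w j) (b j))

/-- The category of Hall algebras for `S`. -/
instance {S : Type u} : Category (HallAlgebra S) where
  Hom := HallHom
  id A :=
    { app := fun _ _ _ a => a
      map_proj := fun _ _ _ => rfl
      map_subst := fun _ _ _ _ _ _ _ => rfl }
  comp f g :=
    { app := fun m w s a => g.app m w s (f.app m w s a)
      map_proj := fun m w i => by simp only [f.map_proj, g.map_proj]
      map_subst := fun n m u w s a b => by
        simp only [f.map_subst, g.map_subst]
        try rfl }
  id_comp f := rfl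
  comp_id f := rfl
  assoc f g h := rfl

/-- A Bénabou algebra for a set of sorts `S`: an `S* × S*`-sorted family of sets equipped with
projections, finite tuplings and compositions satisfying the Bénabou axioms (B1)–(B5). -/
structure BenabouAlgebra (S : Type u) : Type (u + 1) where
  carrier : ∀ (n m : ℕ), (Fin n → S) → (Fin m → S) → Type u
  proj : ∀ (m : ℕ) (w : Fin m → S) (i : Fin m), carrier m 1 w (fun _ => w i)
  tupl : ∀ (n m : ℕ) (u : Fin n → S) (w : Fin m → S),
    (∀ i : Fin m, carrier n 1 u (fun _ => w i)) → carrier n m u w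
  comp : ∀ (n k m : ℕ) (u : Fin n → S) (x : Fin k → S) (w : Fin m → S),
    carrier k m x w → carrier n k u x → carrier n m u w
  B1 : ∀ (n m : ℕ) (u : Fin n → S) (w : Fin m → S) (i : Fin m)
      (a : ∀ j : Fin m, carrier n 1 u (fun _ => w j)),
    comp n m 1 u w (fun _ => w i) (proj m w i) (tupl n m u w a) = a i
  B2 : ∀ (n m : ℕ) (u : Fin n → S) (w : Fin m → S) (a : carrier n m u w),
    comp n n m u u w a (tupl n n u u (proj n u)) = a
  B3 : ∀ (n m : ℕ) (u : Fin n → S) (w : Fin m → S) (a : carrier n m u w),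
    tupl n m u w (fun i => comp n m 1 u w (fun _ => w i) (proj m w i) a) = a
  B4 : ∀ (m : ℕ) (w : Fin m → S) (hm : 0 < m),
    tupl m 1 w (fun _ => w ⟨0, hm⟩) (fun _ => proj m w ⟨0, hm⟩) = proj m w ⟨0, hm⟩
  B5 : ∀ (n k m l : ℕ) (u : Fin n → S) (x : Fin k → S) (w : Fin m → S) (y : Fin l → S)
      (a : carrier n k u x) (b : carrier k m x w) (c : carrier m l w y),
    comp n m l u w y c (comp n k m u x w b a)
      = comp n k l u x y (comp k m l x w y c b) a

/-- A homomorphism of Bénabou algebras. -/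
@[ext]
structure BenabouHom {S : Type u} (A B : BenabouAlgebra S) where
  app : ∀ (n m : ℕ) (u : Fin n → S) (w : Fin m → S), A.carrier n m u w → B.carrier n m u w
  map_proj : ∀ (m : ℕ) (w : Fin m → S) (i : Fin m),
    app m 1 w (fun _ => w i) (A.proj m w i) = B.proj m w i
  map_tupl : ∀ (n m : ℕ) (u : Fin n → S) (w : Fin m → S)
      (a : ∀ i : Fin m, A.carrier n 1 u (fun _ => w i)),
    app n m u w (A.tupl n m u w a)
      = B.tupl n m u w (fun i => app n 1 u (fun _ => w i) (a i))
  map_comp : ∀ (n k m : ℕ) (u : Fin n → S) (x : Fin k → S) (w : Fin m → S)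
      (a : A.carrier k m x w) (b : A.carrier n k u x),
    app n m u w (A.comp n k m u x w a b)
      = B.comp n k m u x w (app k m x w a) (app n k u x b)

/-- The category of Bénabou algebras for `S`. -/
instance {S : Type u} : Category (BenabouAlgebra S) where
  Hom := BenabouHom
  id A :=
    { app := fun _ _ _ _ a => a
      map_proj := fun _ _ _ => rfl
      map_tupl := fun _ _ _ _ _ => rfl
      map_comp := fun _ _ _ _ _ _ _ _ => rfl }
  comp f g :=
    { app := fun n m u w a => g.app n m u w (f.app n m u w a)
      map_proj := fun m w i => by simp only [f.map_proj, g.map_proj]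
      map_tupl := fun n m u w a => by
        simp only [f.map_tupl, g.map_tupl]
        try rfl
      map_comp := fun n k m u x w a b => by
        simp only [f.map_comp, g.map_comp] }
  id_comp f := rfl
  comp_id f := rfl
  assoc f g h := rfl

namespace BenabouAlgebra

variable {S : Type u} (B : BenabouAlgebra S)

theorem comp_tupl {n k m : ℕ} {u : Fin n → S} {x : Fin k → S} {w : Fin m → S}
    (b : ∀ i : Fin m, B.carrier k 1 x (fun _ => w i)) (c : B.carrier n k u x) :
    B.comp n k m u x w (B.tupl k m x w b) c
      = B.tupl n m u w (fun i => B.comp n k 1 u x (fun _ => w i) (b i) c) := by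
  conv_lhs => rw [← B.B3 n m u w (B.comp n k m u x w (B.tupl k m x w b) c)]
  simp only [B.B5, B.B1]

theorem proj_zero_comp {n : ℕ} {u : Fin n → S} {s : S} (a : B.carrier n 1 u (fun _ => s)) :
    B.comp n 1 1 u (fun _ => s) (fun _ => s) (B.proj 1 (fun _ => s) ⟨0, one_pos⟩) a = a := by
  have h_proj_single : ∀ i : Fin 1, B.proj 1 (fun _ => s) i = B.proj 1 (fun _ => s) ⟨0, one_pos⟩ :=
    fun i => congrArg _ (Subsingleton.elim i _)
  calc B.comp n 1 1 u (fun _ => s) (fun _ => s) (B.proj 1 (fun _ => s) ⟨0, one_pos⟩) a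
      = B.comp n 1 1 u (fun _ => s) (fun _ => s)
          (B.tupl 1 1 (fun _ => s) (fun _ => s)
            (fun _ => B.proj 1 (fun _ => s) ⟨0, one_pos⟩)) a := by rw [B.B4]
    _ = B.tupl n 1 u (fun _ => s)
          (fun i => B.comp n 1 1 u (fun _ => s) (fun _ => s) (B.proj 1 (fun _ => s) i) a) := by
        simp only [comp_tupl, h_proj_single]
    _ = a := B.B3 n 1 u (fun _ => s) a

theorem tupl_const {n : ℕ} {u : Fin n → S} {s : S} (a : B.carrier n 1 u (fun _ => s)) :
    B.tupl n 1 u (fun _ => s) (fun _ => a) = a := by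
  conv_rhs => rw [← B.B3 n 1 u (fun _ => s) a]
  congr 1
  funext i
  rw [Subsingleton.elim i ⟨0, one_pos⟩, B.proj_zero_comp]

def toHall : HallAlgebra S where
  carrier m w s := B.carrier m 1 w (fun _ => s)
  proj := B.proj
  subst n m u w s a b := B.comp n m 1 u w (fun _ => s) a (B.tupl n m u w b)
  H1 n m u w i b := B.B1 n m u w i b
  H2 n u s a := B.B2 n 1 u (fun _ => s) a
  H3 n k m u v w s a b c := by
    show B.comp n k 1 u v (fun _ => s)
      (B.comp k m 1 v w (fun _ => s) a (B.tupl k m v w b)) (B.tupl n k u v c) = _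
    rw [← B.B5, B.comp_tupl]

end BenabouAlgebra

namespace HallAlgebra

variable {S : Type u} (A : HallAlgebra S)

def toBenabou : BenabouAlgebra S where
  carrier n m u w := ∀ i : Fin m, A.carrier n u (w i)
  proj m w i := fun _ => A.proj m w i
  tupl n m u w a := fun i => a i ⟨0, one_pos⟩
  comp n k m u x w Q P := fun j => A.subst n k u x (w j) (Q j) P
  B1 n m u w i a := funext fun j => by
    rw [Subsingleton.elim j ⟨0, one_pos⟩]
    exact A.H1 n m u w i _
  B2 n m u w a := funext fun j => A.H2 n u (w j) (a j)
  B3 n m u w a := funext fun i => A.H1 n m u w i a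
  B4 m w hm := rfl
  B5 n k m l u x w y a b c := funext fun j => (A.H3 n k m u x w (y j) (c j) b a).symm

def toBenabouToHallIso : A ≅ A.toBenabou.toHall where
  hom :=
    { app := fun _ _ _ a _ => a
      map_proj := fun _ _ _ => rfl
      map_subst := fun _ _ _ _ _ _ _ => rfl }
  inv :=
    { app := fun _ _ _ a => a ⟨0, one_pos⟩
      map_proj := fun _ _ _ => rfl
      map_subst := fun _ _ _ _ _ _ _ => rfl }
  inv_hom_id := HallHom.ext <| by
    funext _ _ _ a
    exact (eq_const_of_subsingleton a ⟨0, one_pos⟩).symm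

end HallAlgebra

namespace BenabouAlgebra

variable {S : Type u} (B : BenabouAlgebra S)

def toHallToBenabouIso : B.toHall.toBenabou ≅ B where
  hom :=
    { app := fun n m u w a => B.tupl n m u w a
      map_proj := fun m w i => B.tupl_const (B.proj m w i)
      map_tupl := fun n m u w a => congrArg (B.tupl n m u w) <| funext fun i =>
        (B.tupl_const (a i ⟨0, one_pos⟩)).symm.trans <|
          congrArg _ (eq_const_of_subsingleton (a i) ⟨0, one_pos⟩).symm
      map_comp := fun n k m u x w a b => (B.comp_tupl a (B.tupl n k u x b)).symm }
  inv :=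
    { app := fun n m u w a i => B.comp n m 1 u w (fun _ => w i) (B.proj m w i) a
      map_proj := fun m w i => funext fun j => by
        rw [Subsingleton.elim j ⟨0, one_pos⟩]
        exact B.proj_zero_comp (B.proj m w i)
      map_tupl := fun n m u w a => funext fun i => by
        show B.comp n m 1 u w (fun _ => w i) (B.proj m w i) (B.tupl n m u w a) = _
        rw [B.B1]
        exact (B.proj_zero_comp (a i)).symm
      map_comp := fun n k m u x w a b => funext fun j => by
        show _ = B.comp n k 1 u x (fun _ => w j)
          (B.comp k m 1 x w (fun _ => w j) (B.proj m w j) a)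
          (B.tupl n k u x fun i => B.comp n k 1 u x (fun _ => x i) (B.proj k x i) b)
        rw [B.B3, B.B5] }
  hom_inv_id := BenabouHom.ext <| by
    funext n m u w a i
    exact B.B1 n m u w i a
  inv_hom_id := BenabouHom.ext <| by
    funext n m u w a
    exact B.B3 n m u w a

end BenabouAlgebra

section Functors

variable {S : Type u}

def hallToBenabou : HallAlgebra S ⥤ BenabouAlgebra S where
  obj A := A.toBenabou
  map h :=
    { app := fun n m u w a i => h.app n u (w i) (a i)
      map_proj := fun m w i => funext fun _ => h.map_proj m w i
      map_tupl := fun _ _ _ _ _ => rfl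
      map_comp := fun n k m u x w a b => funext fun j => h.map_subst n k u x (w j) (a j) b }

def benabouToHall : BenabouAlgebra S ⥤ HallAlgebra S where
  obj B := B.toHall
  map {B B'} g :=
    { app := fun m w s a => g.app m 1 w (fun _ => s) a
      map_proj := g.map_proj
      map_subst := fun n m u w s a b =>
        (g.map_comp n m 1 u w (fun _ => s) a (B.tupl n m u w b)).trans
          (congrArg (B'.comp n m 1 u w (fun _ => s) _) (g.map_tupl n m u w b)) }

end Functors

/-- **(Fujiwara–Climent–Soliveres.)** For every set of sorts `S`, the category of Hall algebras
for `S` and the category of Bénabou algebras for `S` are equivalent. -/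
theorem hallAlgebra_equiv_benabouAlgebra (S : Type u) :
    Nonempty (HallAlgebra S ≌ BenabouAlgebra S) :=
  ⟨.mk hallToBenabou benabouToHall
    (NatIso.ofComponents HallAlgebra.toBenabouToHallIso fun _ => rfl)
    (NatIso.ofComponents BenabouAlgebra.toHallToBenabouIso fun g => BenabouHom.ext <| by
      funext n m u w a
      exact (g.map_tupl n m u w a).symm)⟩

end Stmt0
end

section
/- Let (φ, d) : (S, Σ) → (T, Λ) be a morphism of many-sorted signatures. Then the reduct functor d^* : Alg(Λ) → Alg(Σ) — which sends a Λ-algebra (B, G) to the Σ-algebra (B_φ, G^d), where for σ ∈ Σ_{w,s} the operation G^d_σ is G_{d(σ)} : B_{φ*(w)} → B_{φ(s)} (noting (B_φ)_w = B_{φ*(w)}), and which sends a Λ-homomorphism f to f_φ = (f_{φ(s)})_{s∈S} — has a left adjoint. -/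
open CategoryTheory

universe u

namespace Stmt2

variable {S T : Type u}

/-- A `Σ`-algebra for an `S`-sorted signature `Sg` (words on `S` being represented as functions
`Fin n → S`): an `S`-sorted set together with, for every formal operation `σ ∈ Σ_{w,s}`, an
operation `A_w → A_s`. -/
structure Alg (Sg : ∀ n : ℕ, (Fin n → S) → S → Type u) : Type (u + 1) where
  carrier : S → Type u
  ops : ∀ (n : ℕ) (w : Fin n → S) (s : S),
    Sg n w s → (∀ i : Fin n, carrier (w i)) → carrier s

/-- A `Σ`-homomorphism. -/
structure AlgHom {Sg : ∀ n : ℕ, (Fin n → S) → S → Type u} (A B : Alg Sg) where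
  app : ∀ s, A.carrier s → B.carrier s
  map_ops : ∀ (n : ℕ) (w : Fin n → S) (s : S) (σ : Sg n w s) (a : ∀ i, A.carrier (w i)),
    app s (A.ops n w s σ a) = B.ops n w s σ (fun i => app (w i) (a i))

instance {Sg : ∀ n : ℕ, (Fin n → S) → S → Type u} : Category (Alg Sg) where
  Hom := AlgHom
  id A := ⟨fun _ a => a, fun _ _ _ _ _ => rfl⟩
  comp f g := ⟨fun s a => g.app s (f.app s a), by
    intro n w s σ a
    simp only [f.map_ops, g.map_ops]
    try rfl⟩
  id_comp f := rfl
  comp_id f := rfl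
  assoc f g h := rfl

/-- The reduct functor `d^* : Alg(Λ) ⥤ Alg(Σ)` along a signature morphism `(φ, d)`. -/
def reduct (φ : S → T) (Sg : ∀ n : ℕ, (Fin n → S) → S → Type u)
    (Lm : ∀ n : ℕ, (Fin n → T) → T → Type u)
    (d : ∀ (n : ℕ) (w : Fin n → S) (s : S), Sg n w s → Lm n (φ ∘ w) (φ s)) :
    Alg Lm ⥤ Alg Sg where
  obj B :=
    { carrier := fun s => B.carrier (φ s)
      ops := fun n w s σ a => B.ops n (φ ∘ w) (φ s) (d n w s σ) a }
  map f :=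
    { app := fun s => f.app (φ s)
      map_ops := fun n w s σ a => f.map_ops n (φ ∘ w) (φ s) (d n w s σ) a }
  map_id B := rfl
  map_comp f g := rfl

/-!
The left adjoint sends a `Σ`-algebra `A` to the `Λ`-term algebra generated by the elements of
each `A_s`, placed in sort `φ s`, modulo the least congruence identifying the generator
`σ^A(a)` with the term `d(σ)(a)` for every `σ ∈ Σ`. A `Λ`-homomorphism out of this algebra is
determined by its values on the generators, and a family of values extends to a homomorphism
exactly when it is a `Σ`-homomorphism `A ⟶ d^* B`: this is the hom-set bijection of the
adjunction.
-/

theorem AlgHom.ext {Sg : ∀ n : ℕ, (Fin n → S) → S → Type u} {A B : Alg Sg}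
    {f g : AlgHom A B} (h : f.app = g.app) : f = g := by
  cases f; cases g; cases h; rfl

section Free

variable {φ : S → T} {Sg : ∀ n : ℕ, (Fin n → S) → S → Type u}
  {Lm : ∀ n : ℕ, (Fin n → T) → T → Type u}

variable (φ Lm) in
inductive Term (A : Alg Sg) : T → Type u
  | var (s : S) (a : A.carrier s) : Term A (φ s)
  | op (n : ℕ) (w : Fin n → T) (t : T) (l : Lm n w t) (ts : ∀ i, Term A (w i)) : Term A t

variable (d : ∀ (n : ℕ) (w : Fin n → S) (s : S), Sg n w s → Lm n (φ ∘ w) (φ s))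
  (A : Alg Sg)

inductive Term.Rel : ∀ t, Term φ Lm A t → Term φ Lm A t → Prop
  | refl (t) (x) : Rel t x x
  | symm (t) (x y) : Rel t x y → Rel t y x
  | trans (t) (x y z) : Rel t x y → Rel t y z → Rel t x z
  | op (n w t) (l : Lm n w t) (ts ts') :
      (∀ i, Rel (w i) (ts i) (ts' i)) → Rel t (.op n w t l ts) (.op n w t l ts')
  | var_ops (n w s) (σ : Sg n w s) (a : ∀ i, A.carrier (w i)) :
      Rel (φ s) (.var s (A.ops n w s σ a))
        (.op n (φ ∘ w) (φ s) (d n w s σ) (fun i => .var (w i) (a i)))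

def Term.setoid (t : T) : Setoid (Term φ Lm A t) :=
  ⟨Term.Rel d A t, ⟨Term.Rel.refl t, Term.Rel.symm t _ _, Term.Rel.trans t _ _ _⟩⟩

def FreeAlg : Alg Lm where
  carrier t := Quotient (Term.setoid d A t)
  ops n w t l qs :=
    Quotient.map (Term.op n w t l) (fun ts ts' => Term.Rel.op n w t l ts ts')
      (Quotient.finChoice qs)

variable {d A}

theorem FreeAlg.ops_mk (n : ℕ) (w : Fin n → T) (t : T) (l : Lm n w t)
    (ts : ∀ i, Term φ Lm A (w i)) :
    (FreeAlg d A).ops n w t l (fun i => (⟦ts i⟧ : (FreeAlg d A).carrier (w i))) =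
      ⟦Term.op n w t l ts⟧ :=
  congrArg (Quotient.map (Term.op n w t l) fun ts ts' => Term.Rel.op n w t l ts ts')
    (Quotient.finChoice_eq ts)

theorem FreeAlg.mk_var_ops {n : ℕ} {w : Fin n → S} {s : S} (σ : Sg n w s)
    (a : ∀ i, A.carrier (w i)) :
    (⟦Term.var s (A.ops n w s σ a)⟧ : (FreeAlg d A).carrier (φ s)) =
      (FreeAlg d A).ops n (φ ∘ w) (φ s) (d n w s σ)
        (fun i => (⟦Term.var (w i) (a i)⟧ : (FreeAlg d A).carrier (φ (w i)))) :=
  (Quotient.sound (Term.Rel.var_ops n w s σ a)).trans (FreeAlg.ops_mk _ _ _ _ _).symm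

theorem FreeAlg.hom_ext {B : Alg Lm} {g g' : FreeAlg d A ⟶ B}
    (h : ∀ s a, g.app (φ s) ⟦Term.var s a⟧ = g'.app (φ s) ⟦Term.var s a⟧) : g = g' := by
  refine AlgHom.ext (funext fun t => funext fun q => ?_)
  induction q using Quotient.ind with | _ x =>
  induction x with
  | var s a => exact h s a
  | op n w t l ts ih =>
    rw [← FreeAlg.ops_mk]
    exact (g.map_ops ..).trans <| (congrArg _ (funext ih)).trans (g'.map_ops ..).symm

variable {B : Alg Lm} (f : A ⟶ (reduct φ Sg Lm d).obj B)

def Term.eval : ∀ t, Term φ Lm A t → B.carrier t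
  | _, .var s a => f.app s a
  | _, .op n w t l ts => B.ops n w t l (fun i => eval (w i) (ts i))

theorem Term.eval_eq_of_rel {t : T} {x y : Term φ Lm A t} (h : Term.Rel d A t x y) :
    x.eval f t = y.eval f t := by
  induction h with
  | refl => rfl
  | symm _ _ _ _ ih => exact ih.symm
  | trans _ _ _ _ _ _ ih₁ ih₂ => exact ih₁.trans ih₂
  | op n w t l ts ts' _ ih => exact congrArg (B.ops n w t l) (funext ih)
  | var_ops n w s σ a => exact f.map_ops n w s σ a

def FreeAlg.lift : FreeAlg d A ⟶ B where
  app t := Quotient.lift (Term.eval f t) fun _ _ => Term.eval_eq_of_rel f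
  map_ops n w t l qs := by
    induction qs using Quotient.induction_on_pi with | _ ts =>
    rw [FreeAlg.ops_mk]
    rfl

variable (d A) in
def freeHomEquiv (B : Alg Lm) : (FreeAlg d A ⟶ B) ≃ (A ⟶ (reduct φ Sg Lm d).obj B) where
  toFun g :=
    { app := fun s a => g.app (φ s) ⟦Term.var s a⟧
      map_ops := fun _ _ s σ a =>
        (congrArg (g.app (φ s)) (FreeAlg.mk_var_ops σ a)).trans (g.map_ops ..) }
  invFun := FreeAlg.lift
  left_inv _ := FreeAlg.hom_ext fun _ _ => rfl
  right_inv _ := AlgHom.ext rfl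

end Free

/-- The reduct functor along a signature morphism has a left adjoint. -/
theorem reduct_hasLeftAdjoint (φ : S → T) (Sg : ∀ n : ℕ, (Fin n → S) → S → Type u)
    (Lm : ∀ n : ℕ, (Fin n → T) → T → Type u)
    (d : ∀ (n : ℕ) (w : Fin n → S) (s : S), Sg n w s → Lm n (φ ∘ w) (φ s)) :
    ∃ L : Alg Sg ⥤ Alg Lm, Nonempty (L ⊣ reduct φ Sg Lm d) := by
  have naturality : ∀ (A : Alg Sg) (B B' : Alg Lm) (g : B ⟶ B') (h : FreeAlg d A ⟶ B),
      freeHomEquiv d A B' (h ≫ g) = freeHomEquiv d A B h ≫ (reduct φ Sg Lm d).map g :=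
    fun _ _ _ _ _ => AlgHom.ext rfl
  exact ⟨Adjunction.leftAdjointOfEquiv (freeHomEquiv d) naturality,
    ⟨Adjunction.adjunctionOfEquivLeft _ naturality⟩⟩

end Stmt2
end

section
/- The category Alg of many-sorted algebras — whose objects are pairs ((S, Σ), A) with (S, Σ) a many-sorted signature and A a Σ-algebra, whose morphisms ((S, Σ), A) → ((T, Λ), B) are pairs ((φ, d), f) with (φ, d) a signature morphism and f : A → d^*(B) a Σ-homomorphism, and whose composition is ((ψ, e), g) ∘ ((φ, d), f) = ((ψ∘φ, e_{φ*×φ} ∘ d), d^*(g) ∘ f) — is complete and cocomplete. -/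
/-!
Limits are assembled from products and equalizers, colimits from coproducts and coequalizers.
Products, equalizers and coproducts are computed layer by layer: on sorts, on operation symbols
and on elements. For the coequalizer of `f g : A ⟶ B` each layer is a free pre-object (the sorts
of `B`, the images of the operation symbols of `B`, terms over the elements of `B`) divided by the
kernel of its evaluation in every cofork of `f` and `g`. This impredicative quotient is the finest
identification through which all coforks factor, so the descent maps are well defined by
construction, and the cofork is universal because every element is the class of a term.
-/

open CategoryTheory Limits

namespace Stmt3

/-- A many-sorted signature `(S, Σ)`, words on `S` being represented as functions `Fin n → S`. -/
structure Sig : Type 1 where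
  sorts : Type
  ops : ∀ n : ℕ, (Fin n → sorts) → sorts → Type

/-- An object of the category `Alg`: a pair `((S, Σ), A)` with `(S, Σ)` a signature and `A`
a `Σ`-algebra. -/
structure Alg : Type 1 where
  sig : Sig
  carrier : sig.sorts → Type
  str : ∀ (n : ℕ) (w : Fin n → sig.sorts) (s : sig.sorts),
    sig.ops n w s → (∀ i : Fin n, carrier (w i)) → carrier s

/-- A morphism of `Alg`: a signature morphism `(φ, d)` together with a `Σ`-homomorphism
`f : A → d^*(B)`. -/
structure AlgHom (A B : Alg) where
  sortMap : A.sig.sorts → B.sig.sorts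
  opMap : ∀ (n : ℕ) (w : Fin n → A.sig.sorts) (s : A.sig.sorts),
    A.sig.ops n w s → B.sig.ops n (sortMap ∘ w) (sortMap s)
  app : ∀ s, A.carrier s → B.carrier (sortMap s)
  map_ops : ∀ (n : ℕ) (w : Fin n → A.sig.sorts) (s : A.sig.sorts)
      (σ : A.sig.ops n w s) (a : ∀ i, A.carrier (w i)),
    app s (A.str n w s σ a)
      = B.str n (sortMap ∘ w) (sortMap s) (opMap n w s σ) (fun i => app (w i) (a i))

instance : Category Alg where
  Hom := AlgHom
  id A :=
    { sortMap := fun s => s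
      opMap := fun _ _ _ σ => σ
      app := fun _ a => a
      map_ops := fun _ _ _ _ _ => rfl }
  comp f g :=
    { sortMap := fun s => g.sortMap (f.sortMap s)
      opMap := fun n w s σ => g.opMap n (f.sortMap ∘ w) (f.sortMap s) (f.opMap n w s σ)
      app := fun s a => g.app (f.sortMap s) (f.app s a)
      map_ops := fun n w s σ a => by
        simp only [f.map_ops, g.map_ops]
        try rfl }
  id_comp f := rfl
  comp_id f := rfl
  assoc f g h := rfl

namespace AlgHom

variable {A B : Alg}

theorem hext {f g : AlgHom A B} (h_sort : ∀ s, f.sortMap s = g.sortMap s)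
    (h_op : ∀ n w s σ, HEq (f.opMap n w s σ) (g.opMap n w s σ))
    (h_app : ∀ s a, HEq (f.app s a) (g.app s a)) : f = g := by
  cases f; cases g
  obtain rfl := funext h_sort
  obtain rfl := funext fun n => funext fun w => funext fun s => funext fun σ =>
    eq_of_heq (h_op n w s σ)
  obtain rfl := funext fun s => funext fun a => eq_of_heq (h_app s a)
  rfl

theorem congr_sortMap {f g : A ⟶ B} (h : f = g) (s : A.sig.sorts) :
    f.sortMap s = g.sortMap s :=
  h ▸ rfl

theorem congr_opMap {f g : A ⟶ B} (h : f = g) (n : ℕ) (w : Fin n → A.sig.sorts)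
    (s : A.sig.sorts) (σ : A.sig.ops n w s) : HEq (f.opMap n w s σ) (g.opMap n w s σ) :=
  h ▸ HEq.rfl

theorem congr_app {f g : A ⟶ B} (h : f = g) (s : A.sig.sorts) (a : A.carrier s) :
    HEq (f.app s a) (g.app s a) :=
  h ▸ HEq.rfl

end AlgHom

namespace Alg

theorem str_congr (B : Alg) {n : ℕ} {w w' : Fin n → B.sig.sorts} {s s' : B.sig.sorts}
    (hw : w = w') (hs : s = s') {σ : B.sig.ops n w s} {σ' : B.sig.ops n w' s'} (hσ : HEq σ σ')
    {a : ∀ k, B.carrier (w k)} {a' : ∀ k, B.carrier (w' k)} (ha : ∀ k, HEq (a k) (a' k)) :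
    HEq (B.str n w s σ a) (B.str n w' s' σ' a') := by
  subst hw hs hσ
  obtain rfl : a = a' := funext fun k => eq_of_heq (ha k)
  rfl

section Pi

variable {ι : Type} (A : ι → Alg)

def pi : Alg where
  sig :=
    { sorts := ∀ j, (A j).sig.sorts
      ops n w s := ∀ j, (A j).sig.ops n (fun k => w k j) (s j) }
  carrier s := ∀ j, (A j).carrier (s j)
  str n _ _ σ a j := (A j).str n _ _ (σ j) fun k => a k j

def piProj (j : ι) : pi A ⟶ A j where
  sortMap s := s j
  opMap _ _ _ σ := σ j
  app _ a := a j
  map_ops _ _ _ _ _ := rfl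

def piLift {X : Alg} (l : ∀ j, X ⟶ A j) : X ⟶ pi A where
  sortMap s j := (l j).sortMap s
  opMap n w s σ j := (l j).opMap n w s σ
  app s a j := (l j).app s a
  map_ops n w s σ a := funext fun j => (l j).map_ops n w s σ a

def piFanIsLimit : IsLimit (Fan.mk (pi A) (piProj A)) :=
  Fan.IsLimit.mk _ (fun c => piLift A c.proj) (fun _ _ => rfl) fun _ m hm =>
    show piLift A (fun j => m ≫ piProj A j) = _ from congrArg (piLift A) (funext hm)

end Pi

section Equalizer

variable {A B : Alg} (f g : A ⟶ B)

def equalizer : Alg where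
  sig :=
    { sorts := { s // f.sortMap s = g.sortMap s }
      ops n w s := { σ : A.sig.ops n (fun k => (w k).1) s.1 //
        HEq (f.opMap _ _ _ σ) (g.opMap _ _ _ σ) } }
  carrier s := { a : A.carrier s.1 // HEq (f.app _ a) (g.app _ a) }
  str n w s σ a := ⟨A.str n _ _ σ.1 fun k => (a k).1, by
    rw [f.map_ops, g.map_ops]
    exact B.str_congr (funext fun k => (w k).2) s.2 σ.2 fun k => (a k).2⟩

def equalizer.ι : equalizer f g ⟶ A where
  sortMap s := s.1
  opMap _ _ _ σ := σ.1
  app _ a := a.1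
  map_ops _ _ _ _ _ := rfl

theorem equalizer.condition : equalizer.ι f g ≫ f = equalizer.ι f g ≫ g :=
  AlgHom.hext (fun s => s.2) (fun _ _ _ σ => σ.2) fun _ a => a.2

variable {f g} in
def equalizer.lift {X : Alg} (k : X ⟶ A) (hk : k ≫ f = k ≫ g) : X ⟶ equalizer f g where
  sortMap s := ⟨k.sortMap s, AlgHom.congr_sortMap hk s⟩
  opMap n w s σ := ⟨k.opMap n w s σ, AlgHom.congr_opMap hk n w s σ⟩
  app s a := ⟨k.app s a, AlgHom.congr_app hk s a⟩
  map_ops n w s σ a := Subtype.ext (k.map_ops n w s σ a)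

def equalizerForkIsLimit : IsLimit (Fork.ofι _ (equalizer.condition f g)) :=
  Fork.IsLimit.mk _ (fun c => equalizer.lift c.ι c.condition) (fun _ => rfl) fun c m hm => by
    -- structure eta: `m` is definitionally the lift of `m ≫ ι`
    change equalizer.lift (m ≫ equalizer.ι f g) (hm ▸ c.condition) = _
    congr 1

end Equalizer

section Sigma

variable {ι : Type} (A : ι → Alg)

inductive SigmaOps (n : ℕ) : (Fin n → Σ i, (A i).sig.sorts) → (Σ i, (A i).sig.sorts) → Type
  | mk (i : ι) {w : Fin n → (A i).sig.sorts} {s : (A i).sig.sorts} (σ : (A i).sig.ops n w s) :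
      SigmaOps n (fun k => ⟨i, w k⟩) ⟨i, s⟩

def sigma : Alg where
  sig :=
    { sorts := Σ i, (A i).sig.sorts
      ops := SigmaOps A }
  carrier p := (A p.1).carrier p.2
  str n _ _ σ a := match σ, a with
    | .mk i σ, a => (A i).str n _ _ σ a

def sigmaInj (i : ι) : A i ⟶ sigma A where
  sortMap s := ⟨i, s⟩
  opMap _ _ _ σ := .mk i σ
  app _ a := a
  map_ops _ _ _ _ _ := rfl

def sigmaDesc {C : Alg} (l : ∀ i, A i ⟶ C) : sigma A ⟶ C where
  sortMap p := (l p.1).sortMap p.2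
  opMap n _ _ σ := match σ with
    | .mk i σ => (l i).opMap n _ _ σ
  app p a := (l p.1).app p.2 a
  map_ops n _ _ σ a := by
    cases σ with
    | mk i σ => exact (l i).map_ops n _ _ σ a

def sigmaCofanIsColimit : IsColimit (Cofan.mk (sigma A) (sigmaInj A)) :=
  Cofan.IsColimit.mk _ (fun c => sigmaDesc A c.inj) (fun _ _ => rfl) fun _ m hm => by
    have h_eta : m = sigmaDesc A (fun i => sigmaInj A i ≫ m) :=
      AlgHom.hext (fun _ => rfl) (fun _ _ _ σ => by cases σ; rfl) fun _ _ => HEq.rfl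
    rw [h_eta]
    exact congrArg (sigmaDesc A) (funext hm)

end Sigma

section Coequalizer

variable {A B : Alg} {f g : A ⟶ B}

variable (f g) in
def CoeqSorts : Type :=
  Quot fun x y : B.sig.sorts => ∀ c : Cofork f g, c.π.sortMap x = c.π.sortMap y

def CoeqSorts.desc (c : Cofork f g) : CoeqSorts f g → c.pt.sig.sorts :=
  Quot.lift c.π.sortMap fun _ _ h => h c

variable (f g) in
inductive CoeqPreOps (n : ℕ) : (Fin n → CoeqSorts f g) → CoeqSorts f g → Type
  | mk {w : Fin n → B.sig.sorts} {s : B.sig.sorts} (σ : B.sig.ops n w s) :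
      CoeqPreOps n (fun k => Quot.mk _ (w k)) (Quot.mk _ s)

def CoeqPreOps.desc (c : Cofork f g) {n : ℕ} {w : Fin n → CoeqSorts f g} {s : CoeqSorts f g} :
    CoeqPreOps f g n w s → c.pt.sig.ops n (CoeqSorts.desc c ∘ w) (CoeqSorts.desc c s)
  | .mk σ => c.π.opMap _ _ _ σ

variable (f g) in
def CoeqOps (n : ℕ) (w : Fin n → CoeqSorts f g) (s : CoeqSorts f g) : Type :=
  Quot fun x y : CoeqPreOps f g n w s => ∀ c, x.desc c = y.desc c

def CoeqOps.desc (c : Cofork f g) {n : ℕ} {w : Fin n → CoeqSorts f g} {s : CoeqSorts f g} :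
    CoeqOps f g n w s → c.pt.sig.ops n (CoeqSorts.desc c ∘ w) (CoeqSorts.desc c s) :=
  Quot.lift (CoeqPreOps.desc c) fun _ _ h => h c

theorem CoeqOps.mk_heq {n : ℕ} {w w' : Fin n → CoeqSorts f g} {s s' : CoeqSorts f g}
    (hw : w = w') (hs : s = s') {x : CoeqPreOps f g n w s} {y : CoeqPreOps f g n w' s'}
    (h : ∀ c, HEq (x.desc c) (y.desc c)) :
    HEq (Quot.mk _ x : CoeqOps f g n w s) (Quot.mk _ y : CoeqOps f g n w' s') := by
  subst hw hs
  exact heq_of_eq (Quot.sound fun c => eq_of_heq (h c))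

variable (f g) in
inductive CoeqTerm : CoeqSorts f g → Type
  | gen {s : B.sig.sorts} (b : B.carrier s) : CoeqTerm (Quot.mk _ s)
  | node {n : ℕ} {w : Fin n → CoeqSorts f g} {s : CoeqSorts f g} (σ : CoeqOps f g n w s)
      (ts : ∀ k, CoeqTerm (w k)) : CoeqTerm s

def CoeqTerm.eval (c : Cofork f g) {s : CoeqSorts f g} :
    CoeqTerm f g s → c.pt.carrier (CoeqSorts.desc c s)
  | .gen b => c.π.app _ b
  | .node σ ts => c.pt.str _ _ _ (σ.desc c) fun k => (ts k).eval c

variable (f g) in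
def CoeqCarrier (s : CoeqSorts f g) : Type :=
  Quot fun t u : CoeqTerm f g s => ∀ c, t.eval c = u.eval c

def CoeqCarrier.desc (c : Cofork f g) {s : CoeqSorts f g} :
    CoeqCarrier f g s → c.pt.carrier (CoeqSorts.desc c s) :=
  Quot.lift (CoeqTerm.eval c) fun _ _ h => h c

theorem CoeqCarrier.mk_heq {s s' : CoeqSorts f g} (hs : s = s') {t : CoeqTerm f g s}
    {u : CoeqTerm f g s'} (h : ∀ c, HEq (t.eval c) (u.eval c)) :
    HEq (Quot.mk _ t : CoeqCarrier f g s) (Quot.mk _ u : CoeqCarrier f g s') := by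
  subst hs
  exact heq_of_eq (Quot.sound fun c => eq_of_heq (h c))

theorem CoeqCarrier.eval_out (c : Cofork f g) {s : CoeqSorts f g} (x : CoeqCarrier f g s) :
    x.out.eval c = x.desc c := by
  conv_rhs => rw [← Quot.out_eq x]
  rfl

variable (f g) in
noncomputable def coequalizer : Alg where
  sig := { sorts := CoeqSorts f g, ops := CoeqOps f g }
  carrier := CoeqCarrier f g
  str _ _ _ σ a := Quot.mk _ (.node σ fun k => (a k).out)

theorem coequalizer.str_mk {n : ℕ} {w : Fin n → CoeqSorts f g} {s : CoeqSorts f g}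
    (σ : CoeqOps f g n w s) (ts : ∀ k, CoeqTerm f g (w k)) :
    (coequalizer f g).str n w s σ (fun k => Quot.mk _ (ts k)) = Quot.mk _ (.node σ ts) :=
  Quot.sound fun c => congrArg (c.pt.str _ _ _ (σ.desc c)) <|
    funext fun k => CoeqCarrier.eval_out c (Quot.mk _ (ts k))

variable (f g) in
noncomputable def coequalizer.π : B ⟶ coequalizer f g where
  sortMap := Quot.mk _
  opMap _ _ _ σ := Quot.mk _ (.mk σ)
  app _ b := Quot.mk _ (.gen b)
  map_ops n w s σ b := Eq.symm <| (coequalizer.str_mk _ _).trans <|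
    Quot.sound fun c => (c.π.map_ops n w s σ b).symm

variable (f g) in
theorem coequalizer.condition : f ≫ coequalizer.π f g = g ≫ coequalizer.π f g := by
  have h_sort (s : A.sig.sorts) :
      (Quot.mk _ (f.sortMap s) : CoeqSorts f g) = Quot.mk _ (g.sortMap s) :=
    Quot.sound fun c => AlgHom.congr_sortMap c.condition s
  refine AlgHom.hext h_sort (fun n w s σ => ?_) fun s a => ?_
  · exact CoeqOps.mk_heq (funext fun k => h_sort (w k)) (h_sort s)
      fun c => AlgHom.congr_opMap c.condition n w s σ
  · exact CoeqCarrier.mk_heq (h_sort s) fun c => AlgHom.congr_app c.condition s a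

noncomputable def coequalizer.desc (c : Cofork f g) : coequalizer f g ⟶ c.pt where
  sortMap := CoeqSorts.desc c
  opMap _ _ _ := CoeqOps.desc c
  app _ := CoeqCarrier.desc c
  map_ops _ _ _ σ a := congrArg (c.pt.str _ _ _ (σ.desc c)) <|
    funext fun k => CoeqCarrier.eval_out c (a k)

theorem coequalizer.eq_desc (c : Cofork f g) (m : coequalizer f g ⟶ c.pt)
    (hm : coequalizer.π f g ≫ m = c.π) : m = coequalizer.desc c := by
  have h_sort : ∀ s, m.sortMap s = CoeqSorts.desc c s :=
    Quot.ind fun x => AlgHom.congr_sortMap hm x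
  have h_op (n w s) (σ : CoeqOps f g n w s) : HEq (m.opMap n w s σ) (σ.desc c) := by
    induction σ using Quot.ind with | _ σ
    cases σ with | mk σ => exact AlgHom.congr_opMap hm _ _ _ σ
  refine AlgHom.hext h_sort h_op fun s x => ?_
  induction x using Quot.ind with | _ t
  induction t with
  | gen b => exact AlgHom.congr_app hm _ b
  | node σ ts ih =>
    have h_map := m.map_ops _ _ _ σ fun k => Quot.mk _ (ts k)
    rw [coequalizer.str_mk] at h_map
    exact (heq_of_eq h_map).trans <|
      c.pt.str_congr (funext fun k => h_sort _) (h_sort _) (h_op _ _ _ σ) ih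

variable (f g) in
noncomputable def coequalizerCoforkIsColimit :
    IsColimit (Cofork.ofπ _ (coequalizer.condition f g)) :=
  Cofork.IsColimit.mk _ coequalizer.desc (fun _ => rfl) coequalizer.eq_desc

end Coequalizer

end Alg

instance : HasProducts.{0} Alg :=
  hasProducts_of_limit_fans _ fun A => Alg.piFanIsLimit A

instance : HasCoproducts.{0} Alg :=
  hasCoproducts_of_colimit_cofans _ fun A => Alg.sigmaCofanIsColimit A

instance {A B : Alg} {f g : A ⟶ B} : HasLimit (parallelPair f g) :=
  HasLimit.mk ⟨_, Alg.equalizerForkIsLimit f g⟩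

instance : HasEqualizers Alg := hasEqualizers_of_hasLimit_parallelPair Alg

instance {A B : Alg} {f g : A ⟶ B} : HasColimit (parallelPair f g) :=
  HasColimit.mk ⟨_, Alg.coequalizerCoforkIsColimit f g⟩

instance : HasCoequalizers Alg := hasCoequalizers_of_hasColimit_parallelPair Alg

/-- The category `Alg` of many-sorted algebras is complete and cocomplete. -/
theorem alg_complete_and_cocomplete : HasLimits Alg ∧ HasColimits Alg :=
  ⟨has_limits_of_hasEqualizers_and_products, has_colimits_of_hasCoequalizers_and_coproducts⟩

end Stmt3
end

section
/- Let MSet ×_Set Sig be the category whose objects are triples (S, Σ, X) with (S, Σ) a many-sorted signature and X an S-sorted set, and whose morphisms (S, Σ, X) → (T, Λ, Y) are triples (φ, d, f) such that (φ, d) : (S, Σ) → (T, Λ) is a signature morphism and f : X → Y_φ is an S-sorted mapping. Then the forgetful functor G from the category Alg of many-sorted algebras to MSet ×_Set Sig — sending an algebra ((S, Σ), (A, F)) to (S, Σ, A) and a morphism ((φ, d), f) to (φ, d, f) — has a left adjoint (which on objects sends (S, Σ, X) to ((S, Σ), T_Σ(X)), the free Σ-algebra on X). -/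
/-!
A morphism `(φ, d, f) : (S, Σ, X) → G((T, Λ), B)` extends uniquely to an algebra morphism
`((φ, d), f♯) : ((S, Σ), T_Σ(X)) → ((T, Λ), B)`: the signature part is kept, and `f♯` is the
evaluation of terms in the reduct `d^*(B)` given by the universal property of `T_Σ(X)`. This
bijection is natural in the algebra, which determines the left adjoint on morphisms.
-/

open CategoryTheory

namespace Stmt4

/-- A many-sorted signature `(S, Σ)`, words on `S` being represented as functions `Fin n → S`. -/
structure Sig : Type 1 where
  sorts : Type
  ops : ∀ n : ℕ, (Fin n → sorts) → sorts → Type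

/-- An object of the category `Alg`: a pair `((S, Σ), A)` with `(S, Σ)` a signature and `A`
a `Σ`-algebra. -/
structure Alg : Type 1 where
  sig : Sig
  carrier : sig.sorts → Type
  str : ∀ (n : ℕ) (w : Fin n → sig.sorts) (s : sig.sorts),
    sig.ops n w s → (∀ i : Fin n, carrier (w i)) → carrier s

/-- A morphism of `Alg`: a signature morphism `(φ, d)` together with a `Σ`-homomorphism
`f : A → d^*(B)`. -/
structure AlgHom (A B : Alg) where
  sortMap : A.sig.sorts → B.sig.sorts
  opMap : ∀ (n : ℕ) (w : Fin n → A.sig.sorts) (s : A.sig.sorts),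
    A.sig.ops n w s → B.sig.ops n (sortMap ∘ w) (sortMap s)
  app : ∀ s, A.carrier s → B.carrier (sortMap s)
  map_ops : ∀ (n : ℕ) (w : Fin n → A.sig.sorts) (s : A.sig.sorts)
      (σ : A.sig.ops n w s) (a : ∀ i, A.carrier (w i)),
    app s (A.str n w s σ a)
      = B.str n (sortMap ∘ w) (sortMap s) (opMap n w s σ) (fun i => app (w i) (a i))

instance : Category Alg where
  Hom := AlgHom
  id A :=
    { sortMap := fun s => s
      opMap := fun _ _ _ σ => σ
      app := fun _ a => a
      map_ops := fun _ _ _ _ _ => rfl }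
  comp f g :=
    { sortMap := fun s => g.sortMap (f.sortMap s)
      opMap := fun n w s σ => g.opMap n (f.sortMap ∘ w) (f.sortMap s) (f.opMap n w s σ)
      app := fun s a => g.app (f.sortMap s) (f.app s a)
      map_ops := fun n w s σ a => by
        simp only [f.map_ops, g.map_ops]
        try rfl }
  id_comp f := rfl
  comp_id f := rfl
  assoc f g h := rfl

/-- An object of the category `MSet ×_Set Sig`: a triple `(S, Σ, X)` with `(S, Σ)` a
signature and `X` an `S`-sorted set. -/
structure MSetSig : Type 1 where
  sorts : Type
  ops : ∀ n : ℕ, (Fin n → sorts) → sorts → Type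
  vars : sorts → Type

/-- A morphism of `MSet ×_Set Sig`: a triple `(φ, d, f)` with `(φ, d)` a signature morphism and
`f : X → Y_φ` an `S`-sorted mapping. -/
structure MSetSigHom (X Y : MSetSig) where
  sortMap : X.sorts → Y.sorts
  opMap : ∀ (n : ℕ) (w : Fin n → X.sorts) (s : X.sorts),
    X.ops n w s → Y.ops n (sortMap ∘ w) (sortMap s)
  app : ∀ s, X.vars s → Y.vars (sortMap s)

instance : Category MSetSig where
  Hom := MSetSigHom
  id X :=
    { sortMap := fun s => s
      opMap := fun _ _ _ σ => σ
      app := fun _ a => a }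
  comp f g :=
    { sortMap := fun s => g.sortMap (f.sortMap s)
      opMap := fun n w s σ => g.opMap n (f.sortMap ∘ w) (f.sortMap s) (f.opMap n w s σ)
      app := fun s a => g.app (f.sortMap s) (f.app s a) }
  id_comp f := rfl
  comp_id f := rfl
  assoc f g h := rfl

/-- The forgetful functor `G : Alg ⥤ MSet ×_Set Sig`. -/
def forget : Alg ⥤ MSetSig where
  obj A := ⟨A.sig.sorts, A.sig.ops, A.carrier⟩
  map f := ⟨f.sortMap, f.opMap, f.app⟩
  map_id A := rfl
  map_comp f g := rfl

inductive Term (Z : MSetSig) : Z.sorts → Type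
  | var {s : Z.sorts} : Z.vars s → Term Z s
  | op {n : ℕ} (w : Fin n → Z.sorts) (s : Z.sorts) (σ : Z.ops n w s)
      (a : ∀ i : Fin n, Term Z (w i)) : Term Z s

def freeAlg (Z : MSetSig) : Alg where
  sig := ⟨Z.sorts, Z.ops⟩
  carrier := Term Z
  str := fun _ w s σ a => Term.op w s σ a

namespace freeAlg

variable {Z : MSetSig} {B : Alg}

def eval (g : Z ⟶ forget.obj B) : ∀ s, Term Z s → B.carrier (g.sortMap s)
  | _, .var x => g.app _ x
  | _, .op w s σ a => B.str _ (g.sortMap ∘ w) (g.sortMap s) (g.opMap _ w s σ)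
      (fun i => eval g (w i) (a i))

def lift (g : Z ⟶ forget.obj B) : freeAlg Z ⟶ B where
  sortMap := g.sortMap
  opMap := g.opMap
  app := eval g
  map_ops _ _ _ _ _ := rfl

def restrict (F : freeAlg Z ⟶ B) : Z ⟶ forget.obj B where
  sortMap := F.sortMap
  opMap := F.opMap
  app s x := F.app s (.var x)

theorem lift_restrict (F : freeAlg Z ⟶ B) : lift (restrict F) = F := by
  obtain ⟨φ, d, f, hf⟩ := F
  suffices heval : eval (restrict ⟨φ, d, f, hf⟩) = f by
    simp only [lift, heval]
    rfl
  funext s t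
  induction t with
  | var x => rfl
  | op w s σ a ih => exact (congrArg (B.str _ _ _ _) (funext ih)).trans (hf _ w s σ a).symm

def homEquiv (Z : MSetSig) (B : Alg) : (freeAlg Z ⟶ B) ≃ (Z ⟶ forget.obj B) where
  toFun := restrict
  invFun := lift
  left_inv := lift_restrict
  right_inv _ := rfl

end freeAlg

/-- The forgetful functor from many-sorted algebras to the fibered product `MSet ×_Set Sig`
has a left adjoint (sending `(S, Σ, X)` to the free `Σ`-algebra `T_Σ(X)` on `X`). -/
theorem forget_hasLeftAdjoint : ∃ L : MSetSig ⥤ Alg, Nonempty (L ⊣ forget) :=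
  ⟨_, ⟨Adjunction.adjunctionOfEquivLeft freeAlg.homEquiv fun _ _ _ _ _ => rfl⟩⟩

end Stmt4
end

section
/- Let A be a set and J an algebraic closure operator on A, i.e., a mapping J : 𝒫(A) → 𝒫(A) that is extensive (X ⊆ J(X)), isotone (X ⊆ Y implies J(X) ⊆ J(Y)) and idempotent (J(J(X)) = J(X)), and that moreover satisfies J(X) = ⋃ { J(F) : F ⊆ X, F finite } for every X ⊆ A. Then there exist an index set I, arities n : I → ℕ and finitary operations f_i : A^{n_i} → A (i ∈ I) such that for every X ⊆ A, J(X) equals the least subset of A that contains X and is closed under every operation f_i. -/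
/-!
Every rule "`c` lies in the closure of the finite set `{a₀, …, a_{m-1}}`" becomes an `m`-ary
operation that sends `(a₀, …, a_{m-1})` to `c` and every other tuple to one of its own entries.
A set closed under all these operations contains the closure of each of its finite subsets,
hence, `J` being algebraic, its whole closure; conversely a closed set `J X` is closed under
them, because `c ∈ J {a₀, …, a_{m-1}} ⊆ J (J X) = J X` whenever all `aₖ ∈ J X`.
-/

namespace BirkhoffFrink

section Generate

variable {A ι : Type*} {n : ι → ℕ}

def IsClosedUnder (f : ∀ i, (Fin (n i) → A) → A) (Y : Set A) : Prop :=
  ∀ i a, (∀ k, a k ∈ Y) → f i a ∈ Y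

def generate (f : ∀ i, (Fin (n i) → A) → A) (X : Set A) : Set A :=
  ⋂₀ {Y | X ⊆ Y ∧ IsClosedUnder f Y}

variable {f : ∀ i, (Fin (n i) → A) → A} {X Y : Set A}

theorem generate_subset (hXY : X ⊆ Y) (hY : IsClosedUnder f Y) : generate f X ⊆ Y :=
  Set.sInter_subset_of_mem ⟨hXY, hY⟩

theorem apply_mem_generate {i : ι} {a : Fin (n i) → A} (ha : ∀ k, a k ∈ X) :
    f i a ∈ generate f X :=
  fun _ ⟨hXY, hY⟩ => hY i a fun k => hXY (ha k)

end Generate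

section Rule

variable {A : Type*} {m : ℕ}

open Classical in
/-- The last branch is never taken: for `m = 0` every `x` equals `a`. -/
noncomputable def ruleOp (a : Fin m → A) (c : A) (x : Fin m → A) : A :=
  if x = a then c else if h : 0 < m then x ⟨0, h⟩ else c

@[simp]
theorem ruleOp_self (a : Fin m → A) (c : A) : ruleOp a c a = c :=
  if_pos rfl

theorem ruleOp_mem_range_of_ne {a x : Fin m → A} (c : A) (hx : x ≠ a) :
    ruleOp a c x ∈ Set.range x := by
  have hm : 0 < m := Nat.pos_of_ne_zero fun hm => hx (by subst hm; exact Subsingleton.elim _ _)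
  rw [ruleOp, if_neg hx, dif_pos hm]
  exact Set.mem_range_self _

end Rule

section ClosureOperator

variable {A : Type*} (J : Set A → Set A)

def RuleIndex : Type _ :=
  Σ m : ℕ, {p : (Fin m → A) × A // p.2 ∈ J (Set.range p.1)}

noncomputable def ruleOps (i : RuleIndex J) : (Fin i.1 → A) → A :=
  ruleOp i.2.1.1 i.2.1.2

variable {J}

theorem isClosedUnder_ruleOps (hmono : Monotone J) {Y : Set A} (hY : J Y ⊆ Y) :
    IsClosedUnder (ruleOps J) Y := by
  rintro ⟨m, ⟨a, c⟩, hc⟩ x hx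
  change ruleOp a c x ∈ Y
  by_cases hxa : x = a
  · rw [hxa, ruleOp_self]
    exact hY (hmono (Set.range_subset_iff.mpr (hxa ▸ hx)) hc)
  · obtain ⟨k, hk⟩ := ruleOp_mem_range_of_ne c hxa
    rw [← hk]
    exact hx k

theorem subset_generate_ruleOps {X : Set A}
    (halg : J X ⊆ ⋃ F ∈ {F : Set A | F ⊆ X ∧ F.Finite}, J F) :
    J X ⊆ generate (ruleOps J) X := by
  intro b hb
  obtain ⟨F, ⟨hFX, hF⟩, hbF⟩ := Set.mem_iUnion₂.mp (halg hb)
  obtain ⟨m, a, -, rfl⟩ := hF.fin_param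
  simpa [ruleOps] using
    apply_mem_generate (f := ruleOps J) (i := ⟨m, (a, b), hbF⟩) fun k => hFX ⟨k, rfl⟩

end ClosureOperator

end BirkhoffFrink

open BirkhoffFrink in
/-- **Birkhoff–Frink representation theorem.** Every algebraic closure operator `J` on a set `A`
is the operator of generated subalgebras for a suitable family of finitary operations on `A`. -/
theorem birkhoff_frink_representation {A : Type} (J : Set A → Set A)
    (hext : ∀ X, X ⊆ J X)
    (hiso : ∀ X Y, X ⊆ Y → J X ⊆ J Y)
    (hidem : ∀ X, J (J X) = J X)
    (halg : ∀ X, J X = ⋃ F ∈ {F : Set A | F ⊆ X ∧ F.Finite}, J F) :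
    ∃ (I : Type) (n : I → ℕ) (f : ∀ i, (Fin (n i) → A) → A),
      ∀ X : Set A,
        J X =
          ⋂₀ {Y : Set A | X ⊆ Y ∧
            ∀ (i : I) (a : Fin (n i) → A), (∀ k, a k ∈ Y) → f i a ∈ Y} :=
  ⟨RuleIndex J, fun i => i.1, ruleOps J, fun X =>
    (subset_generate_ruleOps (halg X).subset).antisymm
      (generate_subset (hext X) (isClosedUnder_ruleOps (fun _ _ => hiso _ _) (hidem X).le))⟩
end

section
/- A complete lattice L is algebraic — i.e., every element of L is the supremum of a set of compact elements of L — if and only if there exist a set A, an index set I, arities n : I → ℕ and finitary operations f_i : A^{n_i} → A (i ∈ I) such that L is order-isomorphic to the set of all subsets of A closed under every operation f_i, ordered by inclusion. -/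
/-!
An algebraic lattice `L` is recovered from its compact elements `C`: `x ↦ {k ∈ C | k ≤ x}` is
an order isomorphism onto the subsets of `C` closed under the operations
`(b₁, …, bₘ) ↦ if k ≤ b₁ ⊔ ⋯ ⊔ bₘ then k else ⊥`, one for each arity `m` and each `k ∈ C`
(the nullary ones put `⊥` in every closed set). Compactness of `k` is what makes a closed set
`Y` contain every `k ≤ sSup Y`.

Conversely, because the operations are finitary, a directed union of closed sets is closed, so
directed suprema of closed sets are unions. Hence the closure of a finite set is compact, and every
closed set is the supremum of the closures of its finite subsets.
-/

open CompleteLattice Set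

theorem isCompactElement_bot {α : Type*} [PartialOrder α] [OrderBot α] :
    IsCompactElement (⊥ : α) :=
  fun _ _ ⟨x, hx⟩ _ _ _ => ⟨x, hx, bot_le⟩

theorem IsCompactElement.map_orderIso {α β : Type*} [PartialOrder α] [PartialOrder β]
    (e : α ≃o β) {k : α} (hk : IsCompactElement k) : IsCompactElement (e k) := by
  intro s u hne hdir hlub hle
  obtain ⟨_, ⟨y, hy, rfl⟩, hky⟩ :=
    hk (e.symm '' s) (e.symm u) (hne.image _) (hdir.mono_comp e.symm.monotone)
      (by simpa using hlub) (e.le_symm_apply.2 hle)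
  exact ⟨y, hy, e.le_symm_apply.1 hky⟩

theorem OrderIso.isCompactlyGenerated {α β : Type*} [CompleteLattice α] [PartialOrder β]
    (e : α ≃o β) (h : ∀ y : β, ∃ s : Set β, (∀ k ∈ s, IsCompactElement k) ∧ IsLUB s y) :
    IsCompactlyGenerated α where
  exists_sSup_eq x := by
    obtain ⟨s, hs, hlub⟩ := h (e x)
    refine ⟨e.symm '' s, ?_, (e.symm.isLUB_image.2 (by simpa using hlub)).sSup_eq⟩
    rintro _ ⟨k, hk, rfl⟩
    exact (hs k hk).map_orderIso e.symm

theorem IsCompactElement.exists_fin_le_iSup {α ι : Type*} [CompleteLattice α] {k : α}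
    (hk : IsCompactElement k) (g : ι → α) (h : k ≤ ⨆ i, g i) :
    ∃ (m : ℕ) (b : Fin m → ι), k ≤ ⨆ j, g (b j) := by
  obtain ⟨s, hs⟩ := hk.exists_finset_of_le_iSup _ g h
  refine ⟨s.card, fun j => (s.equivFin.symm j).1, hs.trans (iSup₂_le fun i hi => ?_)⟩
  exact le_iSup_of_le (s.equivFin ⟨i, hi⟩) (by simp)

section ClosedUnder

variable {A I : Type*} {n : I → ℕ} (f : ∀ i, (Fin (n i) → A) → A)

def ClosedUnder (Y : Set A) : Prop :=
  ∀ (i : I) (a : Fin (n i) → A), (∀ k, a k ∈ Y) → f i a ∈ Y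

def closureUnder (X : Set A) : Set A :=
  ⋂₀ {Z | ClosedUnder f Z ∧ X ⊆ Z}

theorem subset_closureUnder (X : Set A) : X ⊆ closureUnder f X :=
  subset_sInter fun _ hZ => hZ.2

theorem closureUnder_subset {X Z : Set A} (hZ : ClosedUnder f Z) (hXZ : X ⊆ Z) :
    closureUnder f X ⊆ Z :=
  sInter_subset_of_mem ⟨hZ, hXZ⟩

theorem closedUnder_closureUnder (X : Set A) : ClosedUnder f (closureUnder f X) :=
  fun i a ha => mem_sInter.2 fun Z hZ => hZ.1 i a fun k => mem_sInter.1 (ha k) Z hZ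

theorem closedUnder_iUnion_of_directed {ι : Type*} [Nonempty ι] {Y : ι → Set A}
    (hdir : Directed (· ⊆ ·) Y) (hY : ∀ j, ClosedUnder f (Y j)) : ClosedUnder f (⋃ j, Y j) := by
  intro i a ha
  choose j hj using fun k => mem_iUnion.1 (ha k)
  obtain ⟨z, hz⟩ := hdir.finite_le j
  exact mem_iUnion.2 ⟨z, hY z i a fun k => hz k (hj k)⟩

theorem IsLUB.subset_biUnion_of_directedOn {D : Set {Y : Set A // ClosedUnder f Y}}
    {U : {Y : Set A // ClosedUnder f Y}} (hne : D.Nonempty) (hdir : DirectedOn (· ≤ ·) D)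
    (hU : IsLUB D U) : U.1 ⊆ ⋃ Y ∈ D, Y.1 := by
  have : Nonempty D := hne.to_subtype
  have hclosed : ClosedUnder f (⋃ Y : D, Y.1.1) :=
    closedUnder_iUnion_of_directed f hdir.directed_val fun Y => Y.1.2
  have hub : (⟨_, hclosed⟩ : {Y : Set A // ClosedUnder f Y}) ∈ upperBounds D :=
    fun Y hY => subset_iUnion_of_subset ⟨Y, hY⟩ subset_rfl
  rw [biUnion_eq_iUnion]
  exact hU.2 hub

theorem isCompactElement_closureUnder (F : Finset A) :
    IsCompactElement
      (⟨closureUnder f F, closedUnder_closureUnder f F⟩ : {Y : Set A // ClosedUnder f Y}) := by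
  intro D U hne hdir hU hle
  have hF : (F : Set A) ⊆ ⋃ Y ∈ D, Y.1 := fun a ha =>
    hU.subset_biUnion_of_directedOn f hne hdir (hle (subset_closureUnder f F ha))
  obtain ⟨Y, hYD, hFY⟩ := hdir.exists_mem_subset_of_finset_subset_biUnion hne hF
  exact ⟨Y, hYD, closureUnder_subset f Y.2 hFY⟩

theorem isLUB_closureUnder_finset (Y : {Y : Set A // ClosedUnder f Y}) :
    IsLUB {Z | ∃ F : Finset A, ↑F ⊆ Y.1 ∧ Z = ⟨closureUnder f F, closedUnder_closureUnder f F⟩}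
      Y := by
  refine ⟨?_, fun Z hZ a ha => ?_⟩
  · rintro _ ⟨F, hF, rfl⟩
    exact closureUnder_subset f Y.2 hF
  · exact hZ ⟨{a}, by simpa using ha, rfl⟩ (subset_closureUnder f _ (by simp))

theorem exists_isLUB_isCompactElement (Y : {Y : Set A // ClosedUnder f Y}) :
    ∃ s, (∀ k ∈ s, IsCompactElement k) ∧ IsLUB s Y := by
  refine ⟨_, ?_, isLUB_closureUnder_finset f Y⟩
  rintro _ ⟨F, -, rfl⟩
  exact isCompactElement_closureUnder f F

end ClosedUnder

section CompactCover

variable {L : Type*} [CompleteLattice L]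

open Classical in
noncomputable def compactCoverOp (i : ℕ × {k : L // IsCompactElement k})
    (b : Fin i.1 → {k : L // IsCompactElement k}) : {k : L // IsCompactElement k} :=
  if (i.2 : L) ≤ ⨆ j, (b j : L) then i.2 else ⟨⊥, isCompactElement_bot⟩

theorem closedUnder_compactCoverOp_setOf_le (x : L) :
    ClosedUnder (n := Prod.fst) compactCoverOp
      {k : {k : L // IsCompactElement k} | (k : L) ≤ x} := by
  intro i b hb
  unfold compactCoverOp
  split_ifs with h
  · exact h.trans (iSup_le hb)
  · exact bot_le

theorem ClosedUnder.mem_of_le_sSup {Y : Set {k : L // IsCompactElement k}}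
    (hY : ClosedUnder (n := Prod.fst) compactCoverOp Y) (k : {k : L // IsCompactElement k})
    (hk : (k : L) ≤ sSup (Subtype.val '' Y)) : k ∈ Y := by
  rw [sSup_image'] at hk
  obtain ⟨m, b, hb⟩ := k.2.exists_fin_le_iSup _ hk
  have := hY (m, k) (fun j => (b j).1) fun j => (b j).2
  rwa [compactCoverOp, if_pos hb] at this

noncomputable def orderIsoClosedUnderCompactCoverOp [IsCompactlyGenerated L] :
    L ≃o {Y : Set {k : L // IsCompactElement k} // ClosedUnder (n := Prod.fst) compactCoverOp Y} :=
  OrderIso.ofSurjective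
    (OrderEmbedding.ofMapLEIff (fun x => ⟨_, closedUnder_compactCoverOp_setOf_le x⟩) fun x y => by
      change (∀ k : {k : L // IsCompactElement k}, (k : L) ≤ x → (k : L) ≤ y) ↔ x ≤ y
      rw [le_iff_compact_le_imp, Subtype.forall])
    fun Y => ⟨sSup (Subtype.val '' Y.1), Subtype.ext <| Set.ext fun k =>
      ⟨fun hk => Y.2.mem_of_le_sSup k hk, fun hk => le_sSup ⟨k, hk, rfl⟩⟩⟩

end CompactCover

/-- A complete lattice is algebraic (every element is a supremum of compact elements) iff it is
order-isomorphic to the lattice of subsets of some set `A` closed under a given family of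
finitary operations, ordered by inclusion. -/
theorem algebraic_lattice_iff_lattice_of_closed_sets {L : Type} [CompleteLattice L] :
    (∀ x : L, ∃ s : Set L, (∀ k ∈ s, IsCompactElement k) ∧ x = sSup s) ↔
      ∃ (A : Type) (I : Type) (n : I → ℕ) (f : ∀ i, (Fin (n i) → A) → A),
        Nonempty
          (L ≃o {Y : Set A // ∀ (i : I) (a : Fin (n i) → A), (∀ k, a k ∈ Y) → f i a ∈ Y}) := by
  constructor
  · intro h
    have : IsCompactlyGenerated L := ⟨fun x => (h x).imp fun _ hs => ⟨hs.1, hs.2.symm⟩⟩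
    exact ⟨_, _, Prod.fst, compactCoverOp, ⟨orderIsoClosedUnderCompactCoverOp⟩⟩
  · rintro ⟨A, I, n, f, ⟨e⟩⟩ x
    have := e.isCompactlyGenerated (exists_isLUB_isCompactElement f)
    obtain ⟨s, hs, rfl⟩ := IsCompactlyGenerated.exists_sSup_eq x
    exact ⟨s, hs, rfl⟩
end

section
/- Let φ : S → T be a mapping, A and A' S-sorted sets, and 𝒞, 𝒞' S-closure systems on A and A' respectively. Then ∐_φ[𝒞] := { ∐_φ C : C ∈ 𝒞 } is a T-closure system on ∐_φ A; and if an S-sorted mapping f : A → A' is continuous from (A, 𝒞) to (A', 𝒞'), then ∐_φ f is continuous from (∐_φ A, ∐_φ[𝒞]) to (∐_φ A', ∐_φ[𝒞']). -/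
universe u

namespace Stmt12

/-- `𝒞` is a closure system on a sorted set: it contains the total sorted subset and is closed
under (componentwise) intersections of nonempty subfamilies. -/
def IsClSy {S : Type u} {A : S → Type u} (𝒞 : Set (∀ s, Set (A s))) : Prop :=
  (fun _ => Set.univ) ∈ 𝒞 ∧
    ∀ 𝒟 : Set (∀ s, Set (A s)), 𝒟 ⊆ 𝒞 → 𝒟.Nonempty → sInf 𝒟 ∈ 𝒞

variable {S T : Type u} (φ : S → T)

/-- The `T`-sorted set `∐_φ A` induced by an `S`-sorted set `A`: its `t`-component is the
disjoint union `∐_{s ∈ φ⁻¹(t)} A_s` (elements being pairs `(a, s)` with `φ s = t`). -/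
def Cop (A : S → Type u) : T → Type u := fun t => Σ s : {s : S // φ s = t}, A s.val

/-- The `T`-sorted subset `∐_φ X` of `∐_φ A` induced by an `S`-sorted subset `X` of `A`. -/
def copSet {A : S → Type u} (X : ∀ s, Set (A s)) : ∀ t, Set (Cop φ A t) :=
  fun _ => {p | p.2 ∈ X p.1.val}

/-- The `T`-sorted mapping `∐_φ f` induced by an `S`-sorted mapping `f`. -/
def copMap {A A' : S → Type u} (f : ∀ s, A s → A' s) : ∀ t, Cop φ A t → Cop φ A' t :=
  fun _ p => ⟨p.1, f p.1.val p.2⟩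

theorem copSet_univ {A : S → Type u} :
    copSet φ (fun s => (Set.univ : Set (A s))) = fun _ => Set.univ :=
  rfl

theorem copSet_sInf {A : S → Type u} (𝒳 : Set (∀ s, Set (A s))) :
    copSet φ (sInf 𝒳) = sInf (copSet φ '' 𝒳) := by
  funext t
  ext p
  simp [copSet, sInf_apply, Set.iInf_eq_iInter]

theorem preimage_copMap_copSet {A A' : S → Type u} (f : ∀ s, A s → A' s)
    (Y : ∀ s, Set (A' s)) :
    (fun t => copMap φ f t ⁻¹' copSet φ Y t) = copSet φ (fun s => f s ⁻¹' Y s) :=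
  rfl

theorem IsClSy.image_copSet {A : S → Type u} {𝒞 : Set (∀ s, Set (A s))} (h𝒞 : IsClSy 𝒞) :
    IsClSy (copSet φ '' 𝒞) := by
  refine ⟨⟨_, h𝒞.1, copSet_univ φ⟩, fun 𝒟 h𝒟 h𝒟ne => ?_⟩
  have h𝒟_eq : copSet φ '' (𝒞 ∩ copSet φ ⁻¹' 𝒟) = 𝒟 := by
    rw [Set.image_inter_preimage, Set.inter_eq_right.mpr h𝒟]
  refine ⟨sInf (𝒞 ∩ copSet φ ⁻¹' 𝒟), h𝒞.2 _ Set.inter_subset_left ?_, ?_⟩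
  · exact Set.image_nonempty.mp (h𝒟_eq ▸ h𝒟ne)
  · rw [copSet_sInf, h𝒟_eq]

theorem coprod_clSy_and_continuous (A A' : S → Type u)
    (𝒞 : Set (∀ s, Set (A s))) (h𝒞 : IsClSy 𝒞)
    (𝒞' : Set (∀ s, Set (A' s))) :
    IsClSy ((copSet φ (A := A)) '' 𝒞) ∧
      ∀ f : ∀ s, A s → A' s,
        (∀ Y ∈ 𝒞', (fun s => f s ⁻¹' Y s) ∈ 𝒞) →
          ∀ Y ∈ (copSet φ (A := A')) '' 𝒞',
            (fun t => copMap φ f t ⁻¹' Y t) ∈ (copSet φ (A := A)) '' 𝒞 := by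
  refine ⟨h𝒞.image_copSet φ, ?_⟩
  rintro f hf _ ⟨Y, hY, rfl⟩
  rw [preimage_copMap_copSet]
  exact Set.mem_image_of_mem _ (hf Y hY)

end Stmt12
end

section
/- Let φ : S → T be a mapping, 𝒞 an S-closure system on an S-sorted set A, and 𝒟 a T-closure system on a T-sorted set B. For an S-sorted mapping f : A → B_φ, let f^♯ : ∐_φ A → B be the T-sorted mapping given by f^♯_t(a, s) = f_s(a) for s ∈ φ⁻¹(t) and a ∈ A_s. Then f is continuous from (A, 𝒞) to (B_φ, Δ_φ[𝒟]) if and only if f^♯ is continuous from (∐_φ A, ∐_φ[𝒞]) to (B, 𝒟); hence the hom-set bijection of the adjunction ∐_φ ⊣ Δ_φ restricts to a bijection between the respective sets of continuous mappings. -/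
universe u

namespace Stmt13

/-- `𝒞` is a closure system on a sorted set: it contains the total sorted subset and is closed
under (componentwise) intersections of nonempty subfamilies. -/
def IsClSy {S : Type u} {A : S → Type u} (𝒞 : Set (∀ s, Set (A s))) : Prop :=
  (fun _ => Set.univ) ∈ 𝒞 ∧
    ∀ 𝒟 : Set (∀ s, Set (A s)), 𝒟 ⊆ 𝒞 → 𝒟.Nonempty → sInf 𝒟 ∈ 𝒞

variable {S T : Type u} (φ : S → T)

/-- The `T`-sorted set `∐_φ A` induced by an `S`-sorted set `A`. -/
def Cop (A : S → Type u) : T → Type u := fun t => Σ s : {s : S // φ s = t}, A s.val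

/-- The `T`-sorted subset `∐_φ X` of `∐_φ A` induced by an `S`-sorted subset `X` of `A`. -/
def copSet {A : S → Type u} (X : ∀ s, Set (A s)) : ∀ t, Set (Cop φ A t) :=
  fun _ => {p | p.2 ∈ X p.1.val}

/-- The reindexing `Δ_φ[𝒟]` of a family of `T`-sorted subsets of `B`. -/
def deltaSet {B : T → Type u} (𝒟 : Set (∀ t, Set (B t))) : Set (∀ s, Set (B (φ s))) :=
  (fun (X : ∀ t, Set (B t)) => fun s : S => X (φ s)) '' 𝒟

/-- The transpose `f^♯ : ∐_φ A → B` of an `S`-sorted mapping `f : A → B_φ`. -/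
def sharp {A : S → Type u} {B : T → Type u} (f : ∀ s, A s → B (φ s)) :
    ∀ t, Cop φ A t → B t :=
  fun _ p => p.1.property ▸ f p.1.val p.2

def SortedContinuous {I : Type u} {X Y : I → Type u} (𝒞 : Set (∀ i, Set (X i)))
    (𝒟 : Set (∀ i, Set (Y i))) (f : ∀ i, X i → Y i) : Prop :=
  ∀ D ∈ 𝒟, (fun i => f i ⁻¹' D i) ∈ 𝒞

section Adjunction

variable {A : S → Type u} {B : T → Type u}

def flat (g : ∀ t, Cop φ A t → B t) : ∀ s, A s → B (φ s) :=
  fun s a => g (φ s) ⟨⟨s, rfl⟩, a⟩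

theorem flat_sharp (f : ∀ s, A s → B (φ s)) : flat φ (sharp φ f) = f := rfl

theorem sharp_flat (g : ∀ t, Cop φ A t → B t) : sharp φ (flat φ g) = g := by
  funext t ⟨⟨s, hs⟩, a⟩
  subst hs
  rfl

theorem sharp_bijective :
    Function.Bijective (fun f : ∀ s, A s → B (φ s) => sharp φ f) :=
  Function.bijective_iff_has_inverse.mpr ⟨flat φ, flat_sharp φ, sharp_flat φ⟩

theorem sharp_preimage (f : ∀ s, A s → B (φ s)) (Y : ∀ t, Set (B t)) :
    (fun t => sharp φ f t ⁻¹' Y t) = copSet φ (fun s => f s ⁻¹' Y (φ s)) := by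
  funext t
  ext ⟨⟨s, hs⟩, a⟩
  subst hs
  rfl

theorem copSet_injective : Function.Injective (copSet φ (A := A)) := by
  intro X X' h
  funext s
  ext a
  exact Set.ext_iff.mp (congrFun h (φ s)) ⟨⟨s, rfl⟩, a⟩

theorem sortedContinuous_iff_sharp (𝒞 : Set (∀ s, Set (A s))) (𝒟 : Set (∀ t, Set (B t)))
    (f : ∀ s, A s → B (φ s)) :
    SortedContinuous 𝒞 (deltaSet φ 𝒟) f ↔
      SortedContinuous (copSet φ '' 𝒞) 𝒟 (sharp φ f) := by
  simp only [SortedContinuous, deltaSet, Set.forall_mem_image, sharp_preimage,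
    (copSet_injective φ).mem_set_image]

end Adjunction

theorem continuous_iff_sharp_continuous (A : S → Type u) (B : T → Type u)
    (𝒞 : Set (∀ s, Set (A s)))
    (𝒟 : Set (∀ t, Set (B t))) :
    Function.Bijective (fun f : ∀ s, A s → B (φ s) => sharp φ f) ∧
      ∀ f : ∀ s, A s → B (φ s),
        (∀ Y ∈ deltaSet φ 𝒟, (fun s => f s ⁻¹' Y s) ∈ 𝒞) ↔
          ∀ Y ∈ 𝒟, (fun t => sharp φ f t ⁻¹' Y t) ∈ (copSet φ (A := A)) '' 𝒞 :=
  ⟨sharp_bijective φ, sortedContinuous_iff_sharp φ 𝒞 𝒟⟩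

end Stmt13
end

section
/- Let (S, A) be a many-sorted set, I a set, and for each i ∈ I let (S_i, A^i, 𝒞^i) be a closure space (A^i an S_i-sorted set and 𝒞^i an S_i-closure system on A^i) and (φ_i, f^i) a many-sorted mapping from (S, A) to (S_i, A^i), i.e., φ_i : S → S_i and f^i : A → A^i_{φ_i}. Then there exists a unique S-closure system 𝒞 on A (the optimal lift) such that: (1) for every i ∈ I and every C ∈ 𝒞^i, (f^i)⁻¹[C_{φ_i}] ∈ 𝒞; and (2) for every closure space (T, B, 𝒟) and every many-sorted mapping (ψ, g) : (T, B) → (S, A), if for every i ∈ I and every C ∈ 𝒞^i one has ((f^i)_ψ ∘ g)⁻¹[C_{φ_i∘ψ}] ∈ 𝒟, then g⁻¹[X_ψ] ∈ 𝒟 for every X ∈ 𝒞. -/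
/-!
The optimal lift is the closure system generated by the preimages `(fⁱ)⁻¹[C_{φᵢ}]`, i.e. the
set of all intersections of families of such preimages (the empty family giving `A`). Preimages
under a many-sorted mapping commute with arbitrary intersections, so a mapping `(ψ, g)` that pulls
every generator back into a closure system `𝒟` pulls back every member of the lift as well.
Uniqueness follows by applying the universal property of either of two lifts to the identity
mapping `(id, id) : (S, A) → (S, A)`, with the other lift as target.
-/

universe u

namespace Stmt15

def IsClSy {S : Type u} {A : S → Type u} (𝒞 : Set (∀ s, Set (A s))) : Prop :=
  (fun _ => Set.univ) ∈ 𝒞 ∧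
    ∀ 𝒟 : Set (∀ s, Set (A s)), 𝒟 ⊆ 𝒞 → 𝒟.Nonempty → sInf 𝒟 ∈ 𝒞

section CompleteLattice

variable {α β : Type*} [CompleteLattice α] [CompleteLattice β]

theorem subset_sInf_image_powerset (G : Set α) : G ⊆ sInf '' 𝒫 G :=
  fun x hx => ⟨{x}, Set.singleton_subset_iff.2 hx, sInf_singleton⟩

theorem sInf_mem_sInf_image_powerset {G 𝒟 : Set α} (h𝒟 : 𝒟 ⊆ sInf '' 𝒫 G) :
    sInf 𝒟 ∈ sInf '' 𝒫 G := by
  refine ⟨{y ∈ G | sInf 𝒟 ≤ y}, Set.sep_subset _ _, le_antisymm ?_ (le_sInf fun y hy => hy.2)⟩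
  refine le_sInf fun d hd => ?_
  obtain ⟨𝒢, h𝒢G, rfl⟩ := h𝒟 hd
  exact sInf_le_sInf fun y hy => ⟨h𝒢G hy, (sInf_le hd).trans (sInf_le hy)⟩

theorem mapsTo_sInf_image_powerset {F : Type*} [FunLike F α β] [sInfHomClass F α β] (f : F)
    {G : Set α} {𝒟 : Set β} (h𝒟 : ∀ 𝒟' ⊆ 𝒟, sInf 𝒟' ∈ 𝒟) (hG : Set.MapsTo f G 𝒟) :
    Set.MapsTo f (sInf '' 𝒫 G) 𝒟 := by
  rintro _ ⟨𝒢, h𝒢G, rfl⟩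
  rw [map_sInf]
  exact h𝒟 _ (Set.image_subset_iff.2 (hG.mono_left h𝒢G))

end CompleteLattice

theorem isClSy_iff_sInf_mem {S : Type u} {A : S → Type u} {𝒞 : Set (∀ s, Set (A s))} :
    IsClSy 𝒞 ↔ ∀ 𝒟 ⊆ 𝒞, sInf 𝒟 ∈ 𝒞 := by
  refine ⟨fun ⟨huniv, hinter⟩ 𝒟 h𝒟 => ?_, fun h => ⟨?_, fun 𝒟 h𝒟 _ => h 𝒟 h𝒟⟩⟩
  · rcases 𝒟.eq_empty_or_nonempty with rfl | hne
    · rwa [sInf_empty]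
    · exact hinter 𝒟 h𝒟 hne
  · have hempty := h ∅ (Set.empty_subset _)
    rwa [sInf_empty] at hempty

theorem isClSy_sInf_image_powerset {S : Type u} {A : S → Type u} (G : Set (∀ s, Set (A s))) :
    IsClSy (sInf '' 𝒫 G) :=
  isClSy_iff_sInf_mem.2 fun _ => sInf_mem_sInf_image_powerset

def sortedPreimage {T S : Type*} {B : T → Type*} {A : S → Type*} (ψ : T → S)
    (g : ∀ t, B t → A (ψ t)) : sInfHom (∀ s, Set (A s)) (∀ t, Set (B t)) where
  toFun Y t := g t ⁻¹' Y (ψ t)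
  map_sInf' 𝒢 := by
    ext t b
    simp [sInf_apply]

section OptimalLift

variable {S I : Type u} {A : S → Type u} {Si : I → Type u} {Ai : ∀ i, Si i → Type u}

def optimalLift (𝒞i : ∀ i, Set (∀ s, Set (Ai i s))) (φi : ∀ i, S → Si i)
    (fi : ∀ i, ∀ s : S, A s → Ai i (φi i s)) : Set (∀ s, Set (A s)) :=
  sInf '' 𝒫 (⋃ i, sortedPreimage (φi i) (fi i) '' 𝒞i i)

variable (𝒞i : ∀ i, Set (∀ s, Set (Ai i s))) (φi : ∀ i, S → Si i)
  (fi : ∀ i, ∀ s : S, A s → Ai i (φi i s))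

theorem isClSy_optimalLift : IsClSy (optimalLift 𝒞i φi fi) :=
  isClSy_sInf_image_powerset _

theorem sortedPreimage_mem_optimalLift {i : I} {X : ∀ s, Set (Ai i s)} (hX : X ∈ 𝒞i i) :
    sortedPreimage (φi i) (fi i) X ∈ optimalLift 𝒞i φi fi :=
  subset_sInf_image_powerset _ (Set.mem_iUnion.2 ⟨i, X, hX, rfl⟩)

theorem sortedPreimage_mem_of_mem_optimalLift {T : Type u} {B : T → Type u}
    {𝒟 : Set (∀ t, Set (B t))} (h𝒟 : IsClSy 𝒟) {ψ : T → S} {g : ∀ t, B t → A (ψ t)}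
    (hgen : ∀ i, ∀ X ∈ 𝒞i i, sortedPreimage ψ g (sortedPreimage (φi i) (fi i) X) ∈ 𝒟)
    {Y : ∀ s, Set (A s)} (hY : Y ∈ optimalLift 𝒞i φi fi) : sortedPreimage ψ g Y ∈ 𝒟 := by
  refine mapsTo_sInf_image_powerset _ (isClSy_iff_sInf_mem.1 h𝒟) ?_ hY
  simp only [Set.mapsTo_iUnion, Set.mapsTo_image_iff]
  exact hgen

end OptimalLift

theorem optimal_lift_general {S : Type u} (A : S → Type u) {I : Type u}
    (Si : I → Type u) (Ai : ∀ i, Si i → Type u)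
    (𝒞i : ∀ i, Set (∀ s, Set (Ai i s)))
    (φi : ∀ i, S → Si i) (fi : ∀ i, ∀ s : S, A s → Ai i (φi i s)) :
    ∃! 𝒞 : Set (∀ s, Set (A s)),
      IsClSy 𝒞 ∧
        (∀ i, ∀ X ∈ 𝒞i i, (fun s => fi i s ⁻¹' X (φi i s)) ∈ 𝒞) ∧
        ∀ (T : Type u) (Bc : T → Type u) (𝒟 : Set (∀ t, Set (Bc t))), IsClSy 𝒟 →
          ∀ (ψ : T → S) (g : ∀ t, Bc t → A (ψ t)),
            (∀ i, ∀ X ∈ 𝒞i i,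
              (fun t => {b : Bc t | fi i (ψ t) (g t b) ∈ X (φi i (ψ t))}) ∈ 𝒟) →
            ∀ Y ∈ 𝒞, (fun t => g t ⁻¹' Y (ψ t)) ∈ 𝒟 := by
  have hgen : ∀ i, ∀ X ∈ 𝒞i i, sortedPreimage (φi i) (fi i) X ∈ optimalLift 𝒞i φi fi :=
    fun i X hX => sortedPreimage_mem_optimalLift 𝒞i φi fi hX
  refine ⟨optimalLift 𝒞i φi fi, ⟨isClSy_optimalLift 𝒞i φi fi, hgen,
    fun _ _ _ h𝒟 _ _ hcond _ hY => sortedPreimage_mem_of_mem_optimalLift 𝒞i φi fi h𝒟 hcond hY⟩, ?_⟩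
  rintro 𝒞 ⟨h𝒞, hgen𝒞, huniv𝒞⟩
  exact subset_antisymm
    (fun Y hY => huniv𝒞 S A _ (isClSy_optimalLift 𝒞i φi fi) id (fun _ => id) hgen Y hY)
    (fun Y hY => sortedPreimage_mem_of_mem_optimalLift 𝒞i φi fi h𝒞 (ψ := id) (g := fun _ => id)
      hgen𝒞 hY)

/-- **Optimal lifts of closure systems.** Given a family of closure spaces `(Sᵢ, Aⁱ, 𝒞ⁱ)` and of
many-sorted mappings `(φᵢ, fⁱ) : (S, A) → (Sᵢ, Aⁱ)`, there is a unique `S`-closure system `𝒞`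
on `A` making every `(φᵢ, fⁱ)` continuous and couniversal with this property. -/
theorem optimal_lift {S : Type u} (A : S → Type u) {I : Type u}
    (Si : I → Type u) (Ai : ∀ i, Si i → Type u)
    (𝒞i : ∀ i, Set (∀ s, Set (Ai i s))) (h𝒞i : ∀ i, IsClSy (𝒞i i))
    (φi : ∀ i, S → Si i) (fi : ∀ i, ∀ s : S, A s → Ai i (φi i s)) :
    ∃! 𝒞 : Set (∀ s, Set (A s)),
      IsClSy 𝒞 ∧
        (∀ i, ∀ X ∈ 𝒞i i, (fun s => fi i s ⁻¹' X (φi i s)) ∈ 𝒞) ∧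
        ∀ (T : Type u) (Bc : T → Type u) (𝒟 : Set (∀ t, Set (Bc t))), IsClSy 𝒟 →
          ∀ (ψ : T → S) (g : ∀ t, Bc t → A (ψ t)),
            (∀ i, ∀ X ∈ 𝒞i i,
              (fun t => {b : Bc t | fi i (ψ t) (g t b) ∈ X (φi i (ψ t))}) ∈ 𝒟) →
            ∀ Y ∈ 𝒞, (fun t => g t ⁻¹' Y (ψ t)) ∈ 𝒟 :=
  optimal_lift_general A Si Ai 𝒞i φi fi

end Stmt15
end

section
/- Let J : C → C' and K : C' → C be functors with J left adjoint to K, with unit η̄ : Id_C ⟹ K∘J and counit ε̄ : J∘K ⟹ Id_{C'}, and let T : C → C and T' : C' → C' be functors. Then the four mappings between sets of natural transformations — λ₀ ↦ (K ⋆ λ₀) ∘ (η̄ ⋆ T) from Nat(J∘T, T'∘J) to Nat(T, K∘T'∘J); λ₀ ↦ (T' ⋆ ε̄) ∘ (λ₀ ⋆ K) from Nat(J∘T, T'∘J) to Nat(J∘T∘K, T'); λ₁ ↦ (K ⋆ T' ⋆ ε̄) ∘ (λ₁ ⋆ K) from Nat(T, K∘T'∘J) to Nat(T∘K, K∘T');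 and λ₂ ↦ (K ⋆ λ₂) ∘ (η̄ ⋆ T∘K) from Nat(J∘T∘K, T') to Nat(T∘K, K∘T') — are all bijections, and the resulting square of bijections commutes: for every λ₀ ∈ Nat(J∘T, T'∘J), applying the first map followed by the third yields the same element of Nat(T∘K, K∘T') as applying the second map followed by the fourth. -/
/-!
Whiskering by `J ⊣ K` gives two adjunctions between functor categories: `X ↦ X ⋙ J` is left
adjoint to `Y ↦ Y ⋙ K`, and `X ↦ K ⋙ X` is left adjoint to `Y ↦ J ⋙ Y`. Each of the four maps
is a hom-set bijection of one of these (or its inverse). Both composites in the square send `λ₀`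
to its mate `(K ⋆ T' ⋆ ε̄) ∘ (K ⋆ λ₀ ⋆ K) ∘ (η̄ ⋆ T∘K)`.
-/

open CategoryTheory

universe v₁ u₁ v₂ u₂

namespace Stmt19

variable {C : Type u₁} [Category.{v₁} C] {C' : Type u₂} [Category.{v₂} C']

/-- `λ₀ ↦ (K ⋆ λ₀) ∘ (η̄ ⋆ T)`, from `Nat(J∘T, T'∘J)` to `Nat(T, K∘T'∘J)`. -/
def m1 (J : C ⥤ C') (K : C' ⥤ C) (adj : J ⊣ K) (T : C ⥤ C) (T' : C' ⥤ C')
    (lam : T ⋙ J ⟶ J ⋙ T') : T ⟶ J ⋙ T' ⋙ K where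
  app c := adj.unit.app (T.obj c) ≫ K.map (lam.app c)
  naturality c d f := by
    have h := lam.naturality f
    dsimp at h ⊢
    rw [← adj.unit_naturality_assoc (T.map f), ← K.map_comp, h, K.map_comp, Category.assoc]

/-- `λ₀ ↦ (T' ⋆ ε̄) ∘ (λ₀ ⋆ K)`, from `Nat(J∘T, T'∘J)` to `Nat(J∘T∘K, T')`. -/
def m2 (J : C ⥤ C') (K : C' ⥤ C) (adj : J ⊣ K) (T : C ⥤ C) (T' : C' ⥤ C')
    (lam : T ⋙ J ⟶ J ⋙ T') : K ⋙ T ⋙ J ⟶ T' where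
  app c' := lam.app (K.obj c') ≫ T'.map (adj.counit.app c')
  naturality c' d' f := by
    have h := lam.naturality (K.map f)
    dsimp at h ⊢
    rw [← Category.assoc, h, Category.assoc, ← T'.map_comp, adj.counit_naturality f,
      T'.map_comp, Category.assoc]

/-- `λ₁ ↦ (K ⋆ T' ⋆ ε̄) ∘ (λ₁ ⋆ K)`, from `Nat(T, K∘T'∘J)` to `Nat(T∘K, K∘T')`. -/
def m3 (J : C ⥤ C') (K : C' ⥤ C) (adj : J ⊣ K) (T : C ⥤ C) (T' : C' ⥤ C')
    (lam : T ⟶ J ⋙ T' ⋙ K) : K ⋙ T ⟶ T' ⋙ K where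
  app c' := lam.app (K.obj c') ≫ K.map (T'.map (adj.counit.app c'))
  naturality c' d' f := by
    have h := lam.naturality (K.map f)
    dsimp at h ⊢
    rw [← Category.assoc, h, Category.assoc, ← K.map_comp, ← T'.map_comp,
      adj.counit_naturality f, T'.map_comp, K.map_comp, Category.assoc]

/-- `λ₂ ↦ (K ⋆ λ₂) ∘ (η̄ ⋆ T∘K)`, from `Nat(J∘T∘K, T')` to `Nat(T∘K, K∘T')`. -/
def m4 (J : C ⥤ C') (K : C' ⥤ C) (adj : J ⊣ K) (T : C ⥤ C) (T' : C' ⥤ C')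
    (lam : K ⋙ T ⋙ J ⟶ T') : K ⋙ T ⟶ T' ⋙ K where
  app c' := adj.unit.app (T.obj (K.obj c')) ≫ K.map (lam.app c')
  naturality c' d' f := by
    have h := lam.naturality f
    dsimp at h ⊢
    rw [← adj.unit_naturality_assoc (T.map (K.map f)), ← K.map_comp, h, K.map_comp,
      Category.assoc]

section

variable (J : C ⥤ C') (K : C' ⥤ C) (adj : J ⊣ K) (T : C ⥤ C) (T' : C' ⥤ C')

theorem m1_eq_homEquiv_whiskerRight :
    m1 J K adj T T' = (adj.whiskerRight C).homEquiv T (J ⋙ T') := by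
  ext lam c
  rw [Adjunction.homEquiv_unit]
  simp [m1]

theorem m2_eq_homEquiv_whiskerLeft_symm :
    m2 J K adj T T' = ((adj.whiskerLeft C').homEquiv (T ⋙ J) T').symm := by
  ext lam c'
  rw [Adjunction.homEquiv_counit]
  simp [m2]

theorem m3_eq_homEquiv_whiskerLeft_symm :
    m3 J K adj T T' = ((adj.whiskerLeft C).homEquiv T (T' ⋙ K)).symm := by
  ext lam c'
  rw [Adjunction.homEquiv_counit]
  simp [m3]

theorem m4_eq_homEquiv_whiskerRight :
    m4 J K adj T T' = (adj.whiskerRight C').homEquiv (K ⋙ T) T' := by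
  ext lam c'
  rw [Adjunction.homEquiv_unit]
  simp [m4]

theorem m3_comp_m1 : m3 J K adj T T' ∘ m1 J K adj T T' = m4 J K adj T T' ∘ m2 J K adj T T' := by
  ext lam c'
  simp [m1, m2, m3, m4]

end

/-- Given an adjunction `J ⊣ K` (with unit `η̄` and counit `ε̄`) and endofunctors `T`, `T'`, the
four canonical mappings between the sets of natural transformations `Nat(J∘T, T'∘J)`,
`Nat(T, K∘T'∘J)`, `Nat(J∘T∘K, T')` and `Nat(T∘K, K∘T')` are bijections, and the resulting
square of bijections commutes. -/
theorem adjoint_square_bijections (J : C ⥤ C') (K : C' ⥤ C) (adj : J ⊣ K)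
    (T : C ⥤ C) (T' : C' ⥤ C') :
    Function.Bijective (m1 J K adj T T') ∧
    Function.Bijective (m2 J K adj T T') ∧
    Function.Bijective (m3 J K adj T T') ∧
    Function.Bijective (m4 J K adj T T') ∧
    ∀ lam : T ⋙ J ⟶ J ⋙ T',
      m3 J K adj T T' (m1 J K adj T T' lam) = m4 J K adj T T' (m2 J K adj T T' lam) := by
  refine ⟨?_, ?_, ?_, ?_, congrFun (m3_comp_m1 J K adj T T')⟩
  · exact m1_eq_homEquiv_whiskerRight J K adj T T' ▸ Equiv.bijective _
  · exact m2_eq_homEquiv_whiskerLeft_symm J K adj T T' ▸ Equiv.bijective _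
  · exact m3_eq_homEquiv_whiskerLeft_symm J K adj T T' ▸ Equiv.bijective _
  · exact m4_eq_homEquiv_whiskerRight J K adj T T' ▸ Equiv.bijective _

end Stmt19
end
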